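/- Renormalization operations commute: for two distinct depth-d vertices w₁ and w₂ to be refuted, if there is a third depth-d vertex w with h(w) > 0 distinct from both, then renormalizing with respect to w₁ then w₂ yields the same weight function as renormalizing with respect to w₂ then w₁. -/

import Mathlib

/-- An abstract rooted tree: every vertex has a parent (the root is its own
parent), a depth (distance to the root), every vertex is connected to the
root, and each depth level is finite (finitely-branching). -/
structure RTree (V : Type) where
  root : V
  parent : V → V
  depth : V → ℕ
  parent_root : parent root = root
  depth_root : depth root = 0
  depth_parent : ∀ v : V, v ≠ root → depth (parent v) + 1 = depth v
  ancestor_root : ∀ v : V, parent^[depth v] v = root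
  level_finite : ∀ d : ℕ, {v : V | depth v = d}.Finite

namespace RTree

variable {V : Type}

/-- The children of a vertex. -/
def children (T : RTree V) (v : V) : Set V :=
  {u : V | T.parent u = v ∧ u ≠ T.root}

/-- The descendants of `v` that lie `e` levels below `v`. -/
def descAt (T : RTree V) (e : ℕ) (v : V) : Set V :=
  {u : V | T.parent^[e] u = v ∧ T.depth u = T.depth v + e}

end RTree

/-- A coherent weight function (a Hintikka tree): the root gets weight 1 and
the weight of each vertex is the sum of the weights of its children. -/
def Coherent {V : Type} (T : RTree V) (h : V → ℝ) : Prop :=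
  h T.root = 1 ∧ ∀ v : V, h v = ∑ᶠ u ∈ T.children v, h u
open scoped Classical

/-- `u` is an ancestor of (or equal to) `v`. -/
def AncOrEq {V : Type} (T : RTree V) (u v : V) : Prop :=
  ∃ k : ℕ, T.parent^[k] v = u ∧ T.depth v = T.depth u + k

/-- `u` is a proper descendant of `ρ`. -/
def ProperDesc {V : Type} (T : RTree V) (ρ u : V) : Prop :=
  ∃ j : ℕ, 0 < j ∧ T.parent^[j] u = ρ ∧ T.depth u = T.depth ρ + j

/-- `u` is supported (relative to weights `h`, target depth `D`, and the
refuted depth-`D` vertex `w`): there is a chain from `u` down to some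
depth-`D` vertex `v ≠ w` along which `h` is positive (for vertices deeper
than `D`, we require the ancestor at depth `D` to avoid `w` and to carry
positive weight). -/
def Supported {V : Type} (T : RTree V) (h : V → ℝ) (D : ℕ) (w : V) (u : V) : Prop :=
  if T.depth u ≤ D then
    ∃ v : V, T.depth v = D ∧ v ≠ w ∧ T.parent^[D - T.depth u] v = u ∧
      ∀ k : ℕ, k ≤ D - T.depth u → 0 < h (T.parent^[k] v)
  else
    T.parent^[T.depth u - D] u ≠ w ∧ 0 < h (T.parent^[T.depth u - D] u)

/-- The total renormalization constant: sum of `h` over the children of `ρ`. -/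
noncomputable def Ztot {V : Type} (T : RTree V) (h : V → ℝ) (ρ : V) : ℝ :=
  ∑ᶠ u ∈ T.children ρ, h u

/-- The positive renormalization constant: sum of `h` over the supported
children of `ρ`. -/
noncomputable def Zplus {V : Type} (T : RTree V) (h : V → ℝ) (D : ℕ) (w ρ : V) : ℝ :=
  ∑ᶠ u ∈ T.children ρ ∩ {u : V | Supported T h D w u}, h u

/-- Renormalization of `h` refuting the depth-`D` vertex `w`, with
redistribution point `ρ`: zero the unsupported descendants of `ρ`, rescale
the supported descendants of `ρ` by `Z/Z⁺`, and leave everything else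
unchanged. -/
noncomputable def renorm {V : Type} (T : RTree V) (h : V → ℝ) (D : ℕ) (w ρ : V) : V → ℝ :=
  fun u =>
    if ProperDesc T ρ u then
      if Supported T h D w u then (Ztot T h ρ / Zplus T h D w ρ) * h u else 0
    else h u

/-- `ρ` is the redistribution point for refuting the depth-`D` vertex `w`:
it is the deepest ancestor of `w` having a supported child. -/
def IsRedistPoint {V : Type} (T : RTree V) (h : V → ℝ) (D : ℕ) (w ρ : V) : Prop :=
  AncOrEq T ρ w ∧ (∃ c ∈ T.children ρ, Supported T h D w c) ∧
    ∀ u : V, AncOrEq T u w → T.depth ρ < T.depth u →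
      ∀ c ∈ T.children u, ¬ Supported T h D w c

/-!
For coherent nonnegative `h`, supportedness only depends on which depth-`D` vertices carry
positive weight. Renormalization refuting `w` keeps `h` coherent, and its positive depth-`D`
vertices are those of `h` other than `w`; so after refuting `w₁`, being supported for `w₂` means
reaching positive weight that avoids both `w₁` and `w₂`, a condition symmetric in the two.

Each renormalization multiplies the weight at `u` by `Z/Z⁺`, `0` or `1`, and it remains to compare
the products of the two multipliers taken in either order. If neither redistribution point lies
above the other refuted vertex, the two renormalizations act on disjoint subtrees. If both do, both
orders redistribute at one common point `ρ`, with multiplier `h ρ / Z(ρ)` where `Z(ρ)` is the weight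
of the children of `ρ` avoiding both refuted vertices. In the mixed case the subtree of `ρ₂` lies
inside that of `ρ₁`, and the rescaling by the first renormalization cancels in the `Z/Z⁺` of the
second.
-/

namespace RTree

variable {V : Type} (T : RTree V)

theorem depth_iterate_parent {k : ℕ} {v : V} (hk : k ≤ T.depth v) :
    T.depth (T.parent^[k] v) = T.depth v - k := by
  induction k with
  | zero => rfl
  | succ n ih =>
    have hn := ih (by omega)
    have hne : T.parent^[n] v ≠ T.root := fun hr => by
      rw [hr, T.depth_root] at hn
      omega
    have := T.depth_parent _ hne
    rw [Function.iterate_succ_apply']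
    omega

theorem mem_children_iff {v c : V} :
    c ∈ T.children v ↔ T.parent c = v ∧ T.depth c = T.depth v + 1 := by
  constructor
  · rintro ⟨hp, hc⟩
    exact ⟨hp, hp ▸ (T.depth_parent c hc).symm⟩
  · rintro ⟨hp, hd⟩
    refine ⟨hp, fun hr => ?_⟩
    rw [hr, T.depth_root] at hd
    omega

theorem children_finite (v : V) : (T.children v).Finite :=
  (T.level_finite (T.depth v + 1)).subset fun _ hc => (T.mem_children_iff.1 hc).2

end RTree

section Ancestry

variable {V : Type} {T : RTree V} {a b c ρ u x : V}

namespace AncOrEq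

theorem refl (a : V) : AncOrEq T a a := ⟨0, rfl, rfl⟩

theorem trans (hab : AncOrEq T a b) (hbc : AncOrEq T b c) : AncOrEq T a c := by
  obtain ⟨k, rfl, hk⟩ := hab
  obtain ⟨l, rfl, hl⟩ := hbc
  exact ⟨k + l, Function.iterate_add_apply _ _ _ _, by omega⟩

theorem depth_le (hab : AncOrEq T a b) : T.depth a ≤ T.depth b := by
  obtain ⟨k, -, hk⟩ := hab
  omega

theorem of_iterate {k : ℕ} (hk : k ≤ T.depth b) : AncOrEq T (T.parent^[k] b) b :=
  ⟨k, rfl, by rw [T.depth_iterate_parent hk]; omega⟩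

theorem of_depth_le (ha : AncOrEq T a c) (hb : AncOrEq T b c) (hd : T.depth a ≤ T.depth b) :
    AncOrEq T a b := by
  obtain ⟨k, rfl, hk⟩ := ha
  obtain ⟨l, rfl, hl⟩ := hb
  refine ⟨k - l, ?_, by omega⟩
  rw [← Function.iterate_add_apply, Nat.sub_add_cancel (by omega)]

theorem total (ha : AncOrEq T a c) (hb : AncOrEq T b c) : AncOrEq T a b ∨ AncOrEq T b a :=
  (le_total (T.depth a) (T.depth b)).imp (of_depth_le ha hb) (of_depth_le hb ha)

theorem eq_of_depth_eq (hab : AncOrEq T a b) (hd : T.depth a = T.depth b) : a = b := by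
  obtain ⟨k, rfl, hk⟩ := hab
  obtain rfl : k = 0 := by omega
  rfl

theorem antisymm (hab : AncOrEq T a b) (hba : AncOrEq T b a) : a = b :=
  hab.eq_of_depth_eq (le_antisymm hab.depth_le hba.depth_le)

end AncOrEq

theorem properDesc_iff : ProperDesc T ρ u ↔ AncOrEq T ρ u ∧ T.depth ρ < T.depth u := by
  constructor
  · rintro ⟨j, hj, hu, hd⟩
    exact ⟨⟨j, hu, hd⟩, by omega⟩
  · rintro ⟨⟨j, hu, hd⟩, hlt⟩
    exact ⟨j, by omega, hu, hd⟩

theorem ProperDesc.ancOrEq (h : ProperDesc T ρ u) : AncOrEq T ρ u := (properDesc_iff.1 h).1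

theorem ProperDesc.depth_lt (h : ProperDesc T ρ u) : T.depth ρ < T.depth u :=
  (properDesc_iff.1 h).2

theorem AncOrEq.properDesc_of_ne (h : AncOrEq T ρ u) (hne : ρ ≠ u) : ProperDesc T ρ u :=
  properDesc_iff.2 ⟨h, h.depth_le.lt_of_ne fun hd => hne (h.eq_of_depth_eq hd)⟩

theorem AncOrEq.trans_properDesc (ha : AncOrEq T a ρ) (h : ProperDesc T ρ u) :
    ProperDesc T a u :=
  properDesc_iff.2 ⟨ha.trans h.ancOrEq, ha.depth_le.trans_lt h.depth_lt⟩

theorem properDesc_of_mem_children (hc : c ∈ T.children x) : ProperDesc T x c := by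
  obtain ⟨hp, hd⟩ := T.mem_children_iff.1 hc
  exact ⟨1, one_pos, hp, hd⟩

theorem properDesc_iff_ancOrEq_of_mem_children (hc : c ∈ T.children x) :
    ProperDesc T ρ c ↔ AncOrEq T ρ x := by
  have hxc := properDesc_of_mem_children hc
  refine ⟨fun h => h.ancOrEq.of_depth_le hxc.ancOrEq ?_, fun h => h.trans_properDesc hxc⟩
  have := h.depth_lt
  have := (T.mem_children_iff.1 hc).2
  omega

theorem ProperDesc.exists_child (h : ProperDesc T ρ u) : ∃ c ∈ T.children ρ, AncOrEq T c u := by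
  obtain ⟨j, hj, hu, hd⟩ := h
  refine ⟨T.parent^[j - 1] u, (T.mem_children_iff).2 ⟨?_, ?_⟩, .of_iterate (by omega)⟩
  · rw [← Function.iterate_succ_apply' T.parent, Nat.succ_eq_add_one, Nat.sub_add_cancel hj, hu]
  · rw [T.depth_iterate_parent (by omega)]
    omega

end Ancestry

section Finsum

variable {α M : Type*} [AddCommMonoid M] {s t : Set α} {f : α → M}

theorem single_le_finsum_mem [PartialOrder M] [IsOrderedAddMonoid M] (hs : s.Finite)
    (hf : ∀ x ∈ s, 0 ≤ f x) {a : α} (ha : a ∈ s) : f a ≤ ∑ᶠ x ∈ s, f x := by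
  rw [finsum_mem_eq_finite_toFinset_sum f hs]
  exact Finset.single_le_sum (fun x hx => hf x (hs.mem_toFinset.1 hx)) (hs.mem_toFinset.2 ha)

theorem finsum_mem_nonneg [PartialOrder M] [IsOrderedAddMonoid M] (hf : ∀ x, 0 ≤ f x) :
    0 ≤ ∑ᶠ x ∈ s, f x :=
  finsum_nonneg fun x => finsum_nonneg fun _ => hf x

theorem finsum_mem_eq_finsum_mem_inter (hf : ∀ x ∈ s, x ∉ t → f x = 0) :
    ∑ᶠ x ∈ s, f x = ∑ᶠ x ∈ s ∩ t, f x := by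
  refine finsum_mem_inter_support_eq f s (s ∩ t) (Set.ext fun x => ?_)
  simp only [Set.mem_inter_iff, Function.mem_support]
  exact ⟨fun ⟨hs, hx⟩ => ⟨⟨hs, by_contra fun ht => hx (hf x hs ht)⟩, hx⟩,
    fun ⟨⟨hs, _⟩, hx⟩ => ⟨hs, hx⟩⟩

end Finsum

namespace Coherent

variable {V : Type} {T : RTree V} {h : V → ℝ}

theorem le_parent (hcoh : Coherent T h) (hnn : ∀ v, 0 ≤ h v) (v : V) : h v ≤ h (T.parent v) := by
  by_cases hv : v = T.root
  · rw [hv, T.parent_root]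
  · rw [hcoh.2 (T.parent v)]
    exact single_le_finsum_mem (T.children_finite _) (fun x _ => hnn x) ⟨rfl, hv⟩

theorem le_of_ancOrEq (hcoh : Coherent T h) (hnn : ∀ v, 0 ≤ h v) {x v : V}
    (hxv : AncOrEq T x v) : h v ≤ h x := by
  obtain ⟨k, rfl, -⟩ := hxv
  induction k with
  | zero => exact le_rfl
  | succ k ih => exact ih.trans (Function.iterate_succ_apply' T.parent k v ▸ hcoh.le_parent hnn _)

theorem exists_pos_descendant (hcoh : Coherent T h) (hnn : ∀ v, 0 ≤ h v) (n : ℕ) {x : V}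
    (hx : 0 < h x) : ∃ v, AncOrEq T x v ∧ T.depth v = T.depth x + n ∧ 0 < h v := by
  induction n generalizing x with
  | zero => exact ⟨x, .refl x, rfl, hx⟩
  | succ n ih =>
    obtain ⟨c, hc, hc0⟩ := exists_ne_zero_of_finsum_mem_ne_zero (hcoh.2 x ▸ hx.ne')
    obtain ⟨v, hcv, hvd, hv⟩ := ih ((hnn c).lt_of_ne' hc0)
    have := (T.mem_children_iff.1 hc).2
    exact ⟨v, (properDesc_of_mem_children hc).ancOrEq.trans hcv, by omega, hv⟩

end Coherent

/-- Supportedness when every vertex of `W` is refuted: for coherent nonnegative `h`,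
`Supported T h D w` is the case `W = {w}`. -/
def SupportedAvoiding {V : Type} (T : RTree V) (h : V → ℝ) (D : ℕ) (W : Set V) (u : V) : Prop :=
  ∃ v, T.depth v = D ∧ (AncOrEq T u v ∨ AncOrEq T v u) ∧ v ∉ W ∧ 0 < h v

section SupportedAvoiding

variable {V : Type} {T : RTree V} {h : V → ℝ} {D : ℕ} {W W' : Set V} {w ρ u x : V}

theorem SupportedAvoiding.anti (hW : W ⊆ W') (hs : SupportedAvoiding T h D W' u) :
    SupportedAvoiding T h D W u :=
  let ⟨v, hv, hvu, hvW, hpos⟩ := hs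
  ⟨v, hv, hvu, fun h => hvW (hW h), hpos⟩

theorem SupportedAvoiding.of_ancOrEq (hs : SupportedAvoiding T h D W u) (hxu : AncOrEq T x u) :
    SupportedAvoiding T h D W x :=
  let ⟨v, hv, hvu, hvW, hpos⟩ := hs
  ⟨v, hv, hvu.elim (fun huv => .inl (hxu.trans huv)) hxu.total, hvW, hpos⟩

theorem SupportedAvoiding.of_depth_le (hs : SupportedAvoiding T h D W x) (hx : D ≤ T.depth x)
    (hxu : AncOrEq T x u) : SupportedAvoiding T h D W u := by
  obtain ⟨v, hv, hvx, hvW, hpos⟩ := hs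
  have hvx : AncOrEq T v x := hvx.elim
    (fun hxv => hxv.eq_of_depth_eq (by have := hxv.depth_le; omega) ▸ .refl x) id
  exact ⟨v, hv, .inr (hvx.trans hxu), hvW, hpos⟩

theorem SupportedAvoiding.exists_child (hs : SupportedAvoiding T h D W x) (hx : T.depth x < D) :
    ∃ c ∈ T.children x, SupportedAvoiding T h D W c := by
  obtain ⟨v, hv, hxv, hvW, hpos⟩ := hs
  have hxv : AncOrEq T x v := hxv.resolve_right fun hvx => by have := hvx.depth_le; omega
  obtain ⟨c, hc, hcv⟩ := (hxv.properDesc_of_ne fun h => by subst h; omega).exists_child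
  exact ⟨c, hc, v, hv, .inl hcv, hvW, hpos⟩

theorem supportedAvoiding_iff_of_depth_eq (hu : T.depth u = D) :
    SupportedAvoiding T h D W u ↔ u ∉ W ∧ 0 < h u := by
  refine ⟨fun ⟨v, hv, hvu, hvW, hpos⟩ => ?_, fun ⟨huW, hpos⟩ => ⟨u, hu, .inl (.refl u), huW, hpos⟩⟩
  obtain rfl : v = u := hvu.elim (fun huv => (huv.eq_of_depth_eq (hu.trans hv.symm)).symm)
    (fun hvu => hvu.eq_of_depth_eq (hv.trans hu.symm))
  exact ⟨hvW, hpos⟩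

theorem SupportedAvoiding.pos (hcoh : Coherent T h) (hnn : ∀ v, 0 ≤ h v)
    (hs : SupportedAvoiding T h D W u) (hu : T.depth u ≤ D) : 0 < h u := by
  obtain ⟨v, hv, hvu, -, hpos⟩ := hs
  rcases hvu with huv | hvu
  · exact hpos.trans_le (hcoh.le_of_ancOrEq hnn huv)
  · rwa [← hvu.eq_of_depth_eq (by have := hvu.depth_le; omega)]

theorem supported_iff (hcoh : Coherent T h) (hnn : ∀ v, 0 ≤ h v) :
    Supported T h D w u ↔ SupportedAvoiding T h D {w} u := by
  unfold Supported
  split_ifs with hu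
  · constructor
    · rintro ⟨v, hv, hvw, hvu, hpos⟩
      exact ⟨v, hv, .inl ⟨_, hvu, by omega⟩, hvw, hpos 0 (Nat.zero_le _)⟩
    · rintro ⟨v, hv, hvu, hvw, hpos⟩
      obtain ⟨k, hk, hkd⟩ : AncOrEq T u v := hvu.elim id fun hvu =>
        hvu.eq_of_depth_eq (by have := hvu.depth_le; omega) ▸ .refl v
      obtain rfl : k = D - T.depth u := by omega
      exact ⟨v, hv, hvw, hk, fun j hj =>
        hpos.trans_le (hcoh.le_of_ancOrEq hnn (.of_iterate (by omega)))⟩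
  · constructor
    · rintro ⟨hne, hpos⟩
      exact ⟨_, by rw [T.depth_iterate_parent (by omega)]; omega, .inr (.of_iterate (by omega)),
        hne, hpos⟩
    · rintro ⟨v, hv, hvu, hvw, hpos⟩
      obtain ⟨k, rfl, hk⟩ := hvu.resolve_left fun huv => by have := huv.depth_le; omega
      obtain rfl : k = T.depth u - D := by omega
      exact ⟨hvw, hpos⟩

theorem supportedAvoiding_insert_iff_of_not_ancOrEq (hρ : T.depth ρ < D) (hρw : ¬AncOrEq T ρ w)
    (hu : AncOrEq T ρ u) :
    SupportedAvoiding T h D (insert w W) u ↔ SupportedAvoiding T h D W u := by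
  refine ⟨.anti (Set.subset_insert w W), fun ⟨v, hv, hvu, hvW, hpos⟩ => ⟨v, hv, hvu, ?_, hpos⟩⟩
  have hρv : AncOrEq T ρ v :=
    hvu.elim hu.trans fun hvu => hu.of_depth_le hvu (by omega)
  rintro (rfl | hvW')
  exacts [hρw hρv, hvW hvW']

theorem supportedAvoiding_insert_iff_of_not_properDesc (hρw : AncOrEq T ρ w)
    (hρ : SupportedAvoiding T h D (insert w W) ρ) (hu : ¬ProperDesc T ρ u) :
    SupportedAvoiding T h D (insert w W) u ↔ SupportedAvoiding T h D W u := by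
  refine ⟨.anti (Set.subset_insert w W), fun ⟨v, hv, hvu, hvW, hpos⟩ => ?_⟩
  by_cases hvw : v = w
  · subst hvw
    have huρ : AncOrEq T u ρ := by
      have hρu_eq : AncOrEq T ρ u → u = ρ := fun hρu =>
        (not_not.1 fun hne => hu (hρu.properDesc_of_ne (Ne.symm hne)))
      rcases hvu with huv | hvu
      · exact (huv.total hρw).elim id fun hρu => hρu_eq hρu ▸ .refl u
      · exact hρu_eq (hρw.trans hvu) ▸ .refl u
    exact hρ.of_ancOrEq huρ
  · exact ⟨v, hv, hvu, by rintro (rfl | hvW'); exacts [hvw rfl, hvW hvW'], hpos⟩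

theorem eq_zero_of_not_supportedAvoiding (hcoh : Coherent T h) (hnn : ∀ v, 0 ≤ h v)
    (hu : T.depth u ≤ D) (hW : ∀ w ∈ W, ¬AncOrEq T u w) (hs : ¬SupportedAvoiding T h D W u) :
    h u = 0 := by
  refine (hnn u).antisymm' (not_lt.1 fun hpos => hs ?_)
  obtain ⟨v, huv, hv, hvpos⟩ := hcoh.exists_pos_descendant hnn (D - T.depth u) hpos
  exact ⟨v, by omega, .inl huv, fun hvW => hW v hvW huv, hvpos⟩

end SupportedAvoiding

noncomputable def renormFactor {V : Type} (T : RTree V) (h : V → ℝ) (D : ℕ) (w ρ : V) : ℝ :=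
  Ztot T h ρ / Zplus T h D w ρ

noncomputable def renormMultiplier {V : Type} (T : RTree V) (h : V → ℝ) (D : ℕ) (w ρ u : V) : ℝ :=
  if ProperDesc T ρ u then (if Supported T h D w u then renormFactor T h D w ρ else 0) else 1

noncomputable def ZAvoid {V : Type} (T : RTree V) (h : V → ℝ) (D : ℕ) (W : Set V) (ρ : V) : ℝ :=
  ∑ᶠ c ∈ T.children ρ ∩ {u | SupportedAvoiding T h D W u}, h c

section Renorm

variable {V : Type} {T : RTree V} {h g g' : V → ℝ} {D : ℕ} {W : Set V} {w w' ρ u x c : V}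

theorem renorm_eq_mul : renorm T h D w ρ u = renormMultiplier T h D w ρ u * h u := by
  unfold renorm renormMultiplier renormFactor
  split_ifs <;> ring

theorem renorm_of_not_properDesc (hu : ¬ProperDesc T ρ u) : renorm T h D w ρ u = h u :=
  if_neg hu

theorem renormMultiplier_of_not_properDesc (hu : ¬ProperDesc T ρ u) :
    renormMultiplier T h D w ρ u = 1 :=
  if_neg hu

theorem renormMultiplier_of_supported (hs : Supported T h D w u) :
    renormMultiplier T h D w ρ u = if ProperDesc T ρ u then renormFactor T h D w ρ else 1 := by
  simp only [renormMultiplier, if_pos hs]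

theorem renormMultiplier_of_not_supported (hu : ProperDesc T ρ u) (hs : ¬Supported T h D w u) :
    renormMultiplier T h D w ρ u = 0 := by
  simp only [renormMultiplier, if_pos hu, if_neg hs]

theorem renormMultiplier_congr (hF : renormFactor T g' D w' ρ = renormFactor T g D w ρ)
    (hs : ∀ u, ProperDesc T ρ u → (Supported T g' D w' u ↔ Supported T g D w u)) :
    renormMultiplier T g' D w' ρ = renormMultiplier T g D w ρ := by
  funext u
  by_cases hu : ProperDesc T ρ u
  · simp only [renormMultiplier, if_pos hu, hs u hu, hF]
  · simp only [renormMultiplier, if_neg hu]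

theorem renorm_nonneg (hnn : ∀ v, 0 ≤ h v) : 0 ≤ renorm T h D w ρ u := by
  unfold renorm
  split_ifs
  exacts [mul_nonneg (div_nonneg (finsum_mem_nonneg hnn) (finsum_mem_nonneg hnn)) (hnn u), le_rfl,
    hnn u]

namespace IsRedistPoint

theorem ancOrEq_of_supported_child (hρ : IsRedistPoint T h D w ρ) (hx : AncOrEq T x w)
    (hc : c ∈ T.children x) (hs : Supported T h D w c) : AncOrEq T x ρ :=
  hx.of_depth_le hρ.1 (not_lt.1 fun hlt => hρ.2.2 x hx hlt c hc hs)

theorem depth_lt (hρ : IsRedistPoint T h D w ρ) (hwD : T.depth w = D) : T.depth ρ < D := by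
  obtain ⟨c, hc, hs⟩ := hρ.2.1
  obtain ⟨hcp, hcd⟩ := T.mem_children_iff.1 hc
  have := hρ.1.depth_le
  by_contra hge
  have hρw : ρ = w := hρ.1.eq_of_depth_eq (by omega)
  rw [Supported, if_neg (by omega), show T.depth c - D = 1 by omega, Function.iterate_one] at hs
  exact hs.1 (hcp.trans hρw)

theorem properDesc (hρ : IsRedistPoint T h D w ρ) (hwD : T.depth w = D) : ProperDesc T ρ w :=
  hρ.1.properDesc_of_ne fun hρw => by
    have := hρ.depth_lt hwD
    rw [hρw] at this
    omega

theorem exists_pos_child (hcoh : Coherent T h) (hnn : ∀ v, 0 ≤ h v)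
    (hρ : IsRedistPoint T h D w ρ) (hwD : T.depth w = D) :
    ∃ c ∈ T.children ρ, Supported T h D w c ∧ 0 < h c := by
  obtain ⟨c, hc, hs⟩ := hρ.2.1
  have hcd := (T.mem_children_iff.1 hc).2
  have := hρ.depth_lt hwD
  exact ⟨c, hc, hs, ((supported_iff hcoh hnn).1 hs).pos hcoh hnn (by omega)⟩

theorem zplus_pos (hcoh : Coherent T h) (hnn : ∀ v, 0 ≤ h v) (hρ : IsRedistPoint T h D w ρ)
    (hwD : T.depth w = D) : 0 < Zplus T h D w ρ := by
  obtain ⟨c, hc, hs, hpos⟩ := hρ.exists_pos_child hcoh hnn hwD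
  exact hpos.trans_le
    (single_le_finsum_mem ((T.children_finite ρ).inter_of_left _) (fun x _ => hnn x) ⟨hc, hs⟩)

theorem renormFactor_pos (hcoh : Coherent T h) (hnn : ∀ v, 0 ≤ h v)
    (hρ : IsRedistPoint T h D w ρ) (hwD : T.depth w = D) : 0 < renormFactor T h D w ρ := by
  obtain ⟨c, hc, -, hpos⟩ := hρ.exists_pos_child hcoh hnn hwD
  have hρpos : 0 < h ρ := hpos.trans_le ((T.mem_children_iff.1 hc).1 ▸ hcoh.le_parent hnn c)
  exact div_pos (by rwa [Ztot, ← hcoh.2 ρ]) (hρ.zplus_pos hcoh hnn hwD)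

/-- An unsupported child of positive weight would put `x` on the branch of `w`, where by
maximality of `ρ` no vertex below `ρ` has a supported child. -/
theorem eq_zero_of_not_supported (hcoh : Coherent T h) (hnn : ∀ v, 0 ≤ h v)
    (hρ : IsRedistPoint T h D w ρ) (hx : ProperDesc T ρ x) (hsx : Supported T h D w x)
    (hc : c ∈ T.children x) (hsc : ¬Supported T h D w c) : h c = 0 := by
  rw [supported_iff hcoh hnn] at hsx hsc
  have hxc := properDesc_of_mem_children hc
  have hcd := (T.mem_children_iff.1 hc).2
  by_cases hxD : D ≤ T.depth x
  · exact absurd (hsx.of_depth_le hxD hxc.ancOrEq) hsc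
  refine eq_zero_of_not_supportedAvoiding hcoh hnn (by omega) (fun w' hw' hcw => ?_) hsc
  rw [Set.mem_singleton_iff] at hw'
  subst hw'
  obtain ⟨c', hc', hsc'⟩ := hsx.exists_child (by omega)
  exact hρ.2.2 x (hxc.ancOrEq.trans hcw) hx.depth_lt c' hc' ((supported_iff hcoh hnn).2 hsc')

theorem finsum_renorm_children (hcoh : Coherent T h) (hnn : ∀ v, 0 ≤ h v)
    (hρ : IsRedistPoint T h D w ρ) (hwD : T.depth w = D) :
    ∑ᶠ c ∈ T.children ρ, renorm T h D w ρ c = h ρ := by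
  have hZ := hρ.zplus_pos hcoh hnn hwD
  calc ∑ᶠ c ∈ T.children ρ, renorm T h D w ρ c
      = ∑ᶠ c ∈ T.children ρ ∩ {u | Supported T h D w u}, renorm T h D w ρ c :=
        finsum_mem_eq_finsum_mem_inter fun c hc hs => by
          rw [renorm_eq_mul, renormMultiplier_of_not_supported (properDesc_of_mem_children hc) hs,
            zero_mul]
    _ = ∑ᶠ c ∈ T.children ρ ∩ {u | Supported T h D w u}, renormFactor T h D w ρ * h c :=
        finsum_mem_congr rfl fun c ⟨hc, hs⟩ => by
          rw [renorm_eq_mul, renormMultiplier_of_supported hs,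
            if_pos (properDesc_of_mem_children hc)]
    _ = renormFactor T h D w ρ * Zplus T h D w ρ := (mul_finsum_mem _ _).symm
    _ = h ρ := by rw [renormFactor, div_mul_cancel₀ _ hZ.ne', Ztot, ← hcoh.2 ρ]

theorem finsum_renorm_children_of_properDesc (hcoh : Coherent T h)
    (hnn : ∀ v, 0 ≤ h v) (hρ : IsRedistPoint T h D w ρ) (hx : ProperDesc T ρ x) :
    ∑ᶠ c ∈ T.children x, renorm T h D w ρ c = renorm T h D w ρ x := by
  have hch : ∀ c ∈ T.children x,
      renorm T h D w ρ c = renormMultiplier T h D w ρ x * h c := fun c hc => by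
    have hcpd := (properDesc_iff_ancOrEq_of_mem_children hc).2 hx.ancOrEq
    rw [renorm_eq_mul]
    by_cases hsc : Supported T h D w c
    · have hsx : Supported T h D w x := (supported_iff hcoh hnn).2
        (((supported_iff hcoh hnn).1 hsc).of_ancOrEq (properDesc_of_mem_children hc).ancOrEq)
      rw [renormMultiplier_of_supported hsc, renormMultiplier_of_supported hsx, if_pos hcpd,
        if_pos hx]
    by_cases hsx : Supported T h D w x
    · rw [hρ.eq_zero_of_not_supported hcoh hnn hx hsx hc hsc, mul_zero, mul_zero]
    · rw [renormMultiplier_of_not_supported hcpd hsc, renormMultiplier_of_not_supported hx hsx]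
  rw [finsum_mem_congr rfl hch, ← mul_finsum_mem, ← hcoh.2 x, renorm_eq_mul]

end IsRedistPoint

theorem coherent_renorm (hcoh : Coherent T h) (hnn : ∀ v, 0 ≤ h v)
    (hρ : IsRedistPoint T h D w ρ) (hwD : T.depth w = D) : Coherent T (renorm T h D w ρ) := by
  refine ⟨?_, fun x => ?_⟩
  · rw [renorm_of_not_properDesc fun hr => by have := hr.depth_lt; rw [T.depth_root] at this; omega,
      hcoh.1]
  by_cases hρx : AncOrEq T ρ x
  · by_cases hxρ : x = ρ
    · subst hxρ
      rw [hρ.finsum_renorm_children hcoh hnn hwD,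
        renorm_of_not_properDesc fun h => lt_irrefl _ h.depth_lt]
    · exact (hρ.finsum_renorm_children_of_properDesc hcoh hnn
        (hρx.properDesc_of_ne (Ne.symm hxρ))).symm
  · have hch : ∀ c ∈ T.children x, renorm T h D w ρ c = h c := fun c hc =>
      renorm_of_not_properDesc (mt (properDesc_iff_ancOrEq_of_mem_children hc).1 hρx)
    rw [finsum_mem_congr rfl hch, ← hcoh.2 x, renorm_of_not_properDesc fun hx => hρx hx.ancOrEq]

theorem renorm_pos_iff_of_depth_eq (hcoh : Coherent T h) (hnn : ∀ v, 0 ≤ h v)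
    (hρ : IsRedistPoint T h D w ρ) (hwD : T.depth w = D) {v : V} (hv : T.depth v = D) :
    0 < renorm T h D w ρ v ↔ v ≠ w ∧ 0 < h v := by
  have hS : Supported T h D w v ↔ v ≠ w ∧ 0 < h v :=
    (supported_iff hcoh hnn).trans (supportedAvoiding_iff_of_depth_eq hv)
  rw [renorm_eq_mul]
  by_cases hpd : ProperDesc T ρ v
  · by_cases hs : Supported T h D w v
    · rw [renormMultiplier_of_supported hs, if_pos hpd,
        mul_pos_iff_of_pos_left (hρ.renormFactor_pos hcoh hnn hwD)]
      exact ⟨fun hp => ⟨(hS.1 hs).1, hp⟩, And.right⟩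
    · rw [renormMultiplier_of_not_supported hpd hs, zero_mul, lt_self_iff_false, false_iff]
      exact fun h => hs (hS.2 h)
  · rw [renormMultiplier_of_not_properDesc hpd, one_mul]
    exact ⟨fun hp => ⟨fun hvw => hpd (hvw ▸ hρ.properDesc hwD), hp⟩, And.right⟩

theorem supportedAvoiding_renorm_iff (hcoh : Coherent T h) (hnn : ∀ v, 0 ≤ h v)
    (hρ : IsRedistPoint T h D w ρ) (hwD : T.depth w = D) :
    SupportedAvoiding T (renorm T h D w ρ) D W u ↔ SupportedAvoiding T h D (insert w W) u := by
  refine exists_congr fun v => ⟨fun ⟨hv, hvu, hvW, hpos⟩ => ?_, fun ⟨hv, hvu, hvW, hpos⟩ => ?_⟩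
  · obtain ⟨hvw, hpos⟩ := (renorm_pos_iff_of_depth_eq hcoh hnn hρ hwD hv).1 hpos
    exact ⟨hv, hvu, by rintro (rfl | h); exacts [hvw rfl, hvW h], hpos⟩
  · exact ⟨hv, hvu, fun h => hvW (Or.inr h),
      (renorm_pos_iff_of_depth_eq hcoh hnn hρ hwD hv).2 ⟨fun h => hvW (Or.inl h), hpos⟩⟩

end Renorm

section TwoRefutations

variable {V : Type} {T : RTree V} {h : V → ℝ} {D : ℕ} {W W' : Set V} {w w₁ w₂ ρ ρ₁ ρ₂ u : V}

theorem zAvoid_congr (hW : ∀ c ∈ T.children ρ,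
    (SupportedAvoiding T h D W c ↔ SupportedAvoiding T h D W' c)) :
    ZAvoid T h D W ρ = ZAvoid T h D W' ρ :=
  finsum_mem_congr (Set.ext fun c => and_congr_right (hW c)) fun _ _ => rfl

theorem renormFactor_eq_div (hcoh : Coherent T h) (hnn : ∀ v, 0 ≤ h v) :
    renormFactor T h D w ρ = h ρ / ZAvoid T h D {w} ρ := by
  simp only [renormFactor, Ztot, Zplus, ZAvoid, ← hcoh.2 ρ, supported_iff hcoh hnn]

theorem supported_renorm_iff (hcoh : Coherent T h) (hnn : ∀ v, 0 ≤ h v)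
    (hρ₁ : IsRedistPoint T h D w₁ ρ₁) (hw₁D : T.depth w₁ = D) :
    Supported T (renorm T h D w₁ ρ₁) D w₂ u ↔ SupportedAvoiding T h D {w₁, w₂} u :=
  (supported_iff (coherent_renorm hcoh hnn hρ₁ hw₁D) fun _ => renorm_nonneg hnn).trans
    (supportedAvoiding_renorm_iff hcoh hnn hρ₁ hw₁D)

theorem Supported.of_renorm (hcoh : Coherent T h) (hnn : ∀ v, 0 ≤ h v)
    (hρ₁ : IsRedistPoint T h D w₁ ρ₁) (hw₁D : T.depth w₁ = D)
    (hs : Supported T (renorm T h D w₁ ρ₁) D w₂ u) : Supported T h D w₂ u :=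
  (supported_iff hcoh hnn).2
    (((supported_renorm_iff hcoh hnn hρ₁ hw₁D).1 hs).anti (Set.subset_insert _ _))

theorem supported_renorm_iff_of_not_ancOrEq (hcoh : Coherent T h) (hnn : ∀ v, 0 ≤ h v)
    (hρ₁ : IsRedistPoint T h D w₁ ρ₁) (hw₁D : T.depth w₁ = D) (hρ : T.depth ρ < D)
    (hρw₁ : ¬AncOrEq T ρ w₁) (hu : AncOrEq T ρ u) :
    Supported T (renorm T h D w₁ ρ₁) D w₂ u ↔ Supported T h D w₂ u := by
  rw [supported_renorm_iff hcoh hnn hρ₁ hw₁D, supported_iff hcoh hnn]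
  exact supportedAvoiding_insert_iff_of_not_ancOrEq hρ hρw₁ hu

theorem renormMultiplier_renorm (hcoh : Coherent T h) (hnn : ∀ v, 0 ≤ h v)
    (hρ₁ : IsRedistPoint T h D w₁ ρ₁) (hw₁D : T.depth w₁ = D) :
    renormMultiplier T (renorm T h D w₁ ρ₁) D w₂ ρ u =
      if ProperDesc T ρ u then
        (if SupportedAvoiding T h D {w₁, w₂} u then
          renormFactor T (renorm T h D w₁ ρ₁) D w₂ ρ else 0)
      else 1 := by
  simp only [renormMultiplier, supported_renorm_iff hcoh hnn hρ₁ hw₁D]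

theorem zAvoid_renorm (hcoh : Coherent T h) (hnn : ∀ v, 0 ≤ h v)
    (hρ₁ : IsRedistPoint T h D w₁ ρ₁) (hw₁D : T.depth w₁ = D) (x : V) :
    ZAvoid T (renorm T h D w₁ ρ₁) D W x =
      (if AncOrEq T ρ₁ x then renormFactor T h D w₁ ρ₁ else 1) * ZAvoid T h D (insert w₁ W) x := by
  simp only [ZAvoid, supportedAvoiding_renorm_iff hcoh hnn hρ₁ hw₁D]
  rw [mul_finsum_mem]
  refine finsum_mem_congr rfl fun c ⟨hc, hs⟩ => ?_
  have hs₁ : Supported T h D w₁ c := (supported_iff hcoh hnn).2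
    (SupportedAvoiding.anti (Set.singleton_subset_iff.2 (Set.mem_insert w₁ W)) hs)
  rw [renorm_eq_mul, renormMultiplier_of_supported hs₁]
  simp only [properDesc_iff_ancOrEq_of_mem_children hc]

theorem renormFactor_renorm (hcoh : Coherent T h) (hnn : ∀ v, 0 ≤ h v)
    (hρ₁ : IsRedistPoint T h D w₁ ρ₁) (hw₁D : T.depth w₁ = D) (x : V) :
    renormFactor T (renorm T h D w₁ ρ₁) D w₂ x = renorm T h D w₁ ρ₁ x /
      ((if AncOrEq T ρ₁ x then renormFactor T h D w₁ ρ₁ else 1) * ZAvoid T h D {w₁, w₂} x) := by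
  rw [renormFactor_eq_div (coherent_renorm hcoh hnn hρ₁ hw₁D) fun _ => renorm_nonneg hnn,
    zAvoid_renorm hcoh hnn hρ₁ hw₁D]

theorem eq_of_isRedistPoint_renorm (hcoh : Coherent T h) (hnn : ∀ v, 0 ≤ h v)
    (hρ₁ : IsRedistPoint T h D w₁ ρ₁) (hw₁D : T.depth w₁ = D) (hρ₂ : IsRedistPoint T h D w₂ ρ₂)
    (hρ : IsRedistPoint T (renorm T h D w₁ ρ₁) D w₂ ρ)
    (hc₂ : ∃ c ∈ T.children ρ₂, Supported T (renorm T h D w₁ ρ₁) D w₂ c) : ρ = ρ₂ := by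
  obtain ⟨c, hc, hs⟩ := hρ.2.1
  obtain ⟨c₂, hc₂, hs₂⟩ := hc₂
  exact (hρ₂.ancOrEq_of_supported_child hρ.1 hc (hs.of_renorm hcoh hnn hρ₁ hw₁D)).antisymm
    (hρ.ancOrEq_of_supported_child hρ₂.1 hc₂ hs₂)

theorem eq_of_isRedistPoint_renorm_of_not_ancOrEq (hcoh : Coherent T h) (hnn : ∀ v, 0 ≤ h v)
    (hρ₁ : IsRedistPoint T h D w₁ ρ₁) (hw₁D : T.depth w₁ = D) (hρ₂ : IsRedistPoint T h D w₂ ρ₂)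
    (hw₂D : T.depth w₂ = D) (hρ : IsRedistPoint T (renorm T h D w₁ ρ₁) D w₂ ρ)
    (hρ₂w₁ : ¬AncOrEq T ρ₂ w₁) : ρ = ρ₂ :=
  let ⟨c, hc, hs⟩ := hρ₂.2.1
  eq_of_isRedistPoint_renorm hcoh hnn hρ₁ hw₁D hρ₂ hρ ⟨c, hc,
    (supported_renorm_iff_of_not_ancOrEq hcoh hnn hρ₁ hw₁D (hρ₂.depth_lt hw₂D) hρ₂w₁
      (properDesc_of_mem_children hc).ancOrEq).2 hs⟩

end TwoRefutations

section Commutation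

variable {V : Type} {T : RTree V} {h : V → ℝ} {D : ℕ} {w₁ w₂ ρ ρ₁ ρ₂ ρ₁₂ ρ₂₁ u : V}

theorem renorm_renorm_eq_mul {g : V → ℝ} {w w' ρ' : V} :
    renorm T (renorm T g D w ρ) D w' ρ' u =
      renormMultiplier T (renorm T g D w ρ) D w' ρ' u * renormMultiplier T g D w ρ u * g u := by
  rw [renorm_eq_mul, renorm_eq_mul, mul_assoc]

theorem renormMultiplier_renorm_of_not_ancOrEq (hcoh : Coherent T h) (hnn : ∀ v, 0 ≤ h v)
    (hρ₁ : IsRedistPoint T h D w₁ ρ₁) (hw₁D : T.depth w₁ = D) (hρ₂ : IsRedistPoint T h D w₂ ρ₂)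
    (hw₂D : T.depth w₂ = D) (hρ₁w₂ : ¬AncOrEq T ρ₁ w₂) (hρ₂w₁ : ¬AncOrEq T ρ₂ w₁) :
    renormMultiplier T (renorm T h D w₁ ρ₁) D w₂ ρ₂ = renormMultiplier T h D w₂ ρ₂ := by
  have hd₂ := hρ₂.depth_lt hw₂D
  refine renormMultiplier_congr ?_ fun u hu =>
    supported_renorm_iff_of_not_ancOrEq hcoh hnn hρ₁ hw₁D hd₂ hρ₂w₁ hu.ancOrEq
  have hρ₁ρ₂ : ¬AncOrEq T ρ₁ ρ₂ := fun h => hρ₁w₂ (h.trans hρ₂.1)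
  rw [renormFactor_renorm hcoh hnn hρ₁ hw₁D, if_neg hρ₁ρ₂, one_mul,
    renorm_of_not_properDesc fun h => hρ₁ρ₂ h.ancOrEq, renormFactor_eq_div hcoh hnn,
    zAvoid_congr fun c hc => supportedAvoiding_insert_iff_of_not_ancOrEq hd₂ hρ₂w₁
      (properDesc_of_mem_children hc).ancOrEq]

theorem renormMultiplier_comm_of_not_ancOrEq (hcoh : Coherent T h) (hnn : ∀ v, 0 ≤ h v)
    (hw₁D : T.depth w₁ = D) (hw₂D : T.depth w₂ = D) (hρ₁ : IsRedistPoint T h D w₁ ρ₁)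
    (hρ₁₂ : IsRedistPoint T (renorm T h D w₁ ρ₁) D w₂ ρ₁₂) (hρ₂ : IsRedistPoint T h D w₂ ρ₂)
    (hρ₂₁ : IsRedistPoint T (renorm T h D w₂ ρ₂) D w₁ ρ₂₁)
    (hρ₁w₂ : ¬AncOrEq T ρ₁ w₂) (hρ₂w₁ : ¬AncOrEq T ρ₂ w₁) :
    renormMultiplier T (renorm T h D w₁ ρ₁) D w₂ ρ₁₂ u * renormMultiplier T h D w₁ ρ₁ u =
      renormMultiplier T (renorm T h D w₂ ρ₂) D w₁ ρ₂₁ u * renormMultiplier T h D w₂ ρ₂ u := by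
  obtain rfl := eq_of_isRedistPoint_renorm_of_not_ancOrEq hcoh hnn hρ₁ hw₁D hρ₂ hw₂D hρ₁₂ hρ₂w₁
  obtain rfl := eq_of_isRedistPoint_renorm_of_not_ancOrEq hcoh hnn hρ₂ hw₂D hρ₁ hw₁D hρ₂₁ hρ₁w₂
  rw [renormMultiplier_renorm_of_not_ancOrEq hcoh hnn hρ₁ hw₁D hρ₂ hw₂D hρ₁w₂ hρ₂w₁,
    renormMultiplier_renorm_of_not_ancOrEq hcoh hnn hρ₂ hw₂D hρ₁ hw₁D hρ₂w₁ hρ₁w₂, mul_comm]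

theorem IsRedistPoint.supportedAvoiding_of_not_ancOrEq (hcoh : Coherent T h)
    (hnn : ∀ v, 0 ≤ h v) (hρ₂ : IsRedistPoint T h D w₂ ρ₂) (hw₂D : T.depth w₂ = D)
    (hρ₂w₁ : ¬AncOrEq T ρ₂ w₁) : SupportedAvoiding T h D {w₂, w₁} ρ₂ := by
  obtain ⟨c, hc, hs⟩ := hρ₂.2.1
  have hρ₂c := (properDesc_of_mem_children hc).ancOrEq
  rw [Set.pair_comm]
  exact ((supportedAvoiding_insert_iff_of_not_ancOrEq (hρ₂.depth_lt hw₂D) hρ₂w₁ hρ₂c).2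
    ((supported_iff hcoh hnn).1 hs)).of_ancOrEq hρ₂c

theorem IsRedistPoint.supportedAvoiding_iff_of_not_properDesc (hcoh : Coherent T h)
    (hnn : ∀ v, 0 ≤ h v) (hρ₂ : IsRedistPoint T h D w₂ ρ₂) (hw₂D : T.depth w₂ = D)
    (hρ₂w₁ : ¬AncOrEq T ρ₂ w₁) (hu : ¬ProperDesc T ρ₂ u) :
    SupportedAvoiding T h D {w₁, w₂} u ↔ Supported T h D w₁ u := by
  rw [Set.pair_comm, supported_iff hcoh hnn]
  exact supportedAvoiding_insert_iff_of_not_properDesc hρ₂.1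
    (hρ₂.supportedAvoiding_of_not_ancOrEq hcoh hnn hw₂D hρ₂w₁) hu

theorem renormMultiplier_renorm_of_properDesc (hcoh : Coherent T h) (hnn : ∀ v, 0 ≤ h v)
    (hρ₁ : IsRedistPoint T h D w₁ ρ₁) (hw₁D : T.depth w₁ = D) (hρ₂ : IsRedistPoint T h D w₂ ρ₂)
    (hw₂D : T.depth w₂ = D) (hρ₁ρ₂ : ProperDesc T ρ₁ ρ₂) (hρ₂w₁ : ¬AncOrEq T ρ₂ w₁) :
    renormMultiplier T (renorm T h D w₁ ρ₁) D w₂ ρ₂ = renormMultiplier T h D w₂ ρ₂ := by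
  have hd₂ := hρ₂.depth_lt hw₂D
  refine renormMultiplier_congr ?_ fun u hu =>
    supported_renorm_iff_of_not_ancOrEq hcoh hnn hρ₁ hw₁D hd₂ hρ₂w₁ hu.ancOrEq
  have hs₁ : Supported T h D w₁ ρ₂ :=
    (hρ₂.supportedAvoiding_iff_of_not_properDesc hcoh hnn hw₂D hρ₂w₁
      fun h => lt_irrefl _ h.depth_lt).1
      (Set.pair_comm w₂ w₁ ▸ hρ₂.supportedAvoiding_of_not_ancOrEq hcoh hnn hw₂D hρ₂w₁)
  rw [renormFactor_renorm hcoh hnn hρ₁ hw₁D, if_pos hρ₁ρ₂.ancOrEq, renorm_eq_mul,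
    renormMultiplier_of_supported hs₁, if_pos hρ₁ρ₂,
    mul_div_mul_left _ _ (hρ₁.renormFactor_pos hcoh hnn hw₁D).ne', renormFactor_eq_div hcoh hnn,
    zAvoid_congr fun c hc => supportedAvoiding_insert_iff_of_not_ancOrEq hd₂ hρ₂w₁
      (properDesc_of_mem_children hc).ancOrEq]

theorem renormFactor_renorm_of_properDesc (hcoh : Coherent T h) (hnn : ∀ v, 0 ≤ h v)
    (hρ₂ : IsRedistPoint T h D w₂ ρ₂) (hw₂D : T.depth w₂ = D) (hρ₁ρ₂ : ProperDesc T ρ₁ ρ₂)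
    (hρ₂w₁ : ¬AncOrEq T ρ₂ w₁) :
    renormFactor T (renorm T h D w₂ ρ₂) D w₁ ρ₁ = renormFactor T h D w₁ ρ₁ := by
  have hρ₂ρ₁ : ¬AncOrEq T ρ₂ ρ₁ := fun h => absurd h.depth_le (not_le.2 hρ₁ρ₂.depth_lt)
  rw [renormFactor_renorm hcoh hnn hρ₂ hw₂D, if_neg hρ₂ρ₁, one_mul,
    renorm_of_not_properDesc fun h => hρ₂ρ₁ h.ancOrEq, renormFactor_eq_div hcoh hnn,
    Set.pair_comm]
  refine congrArg _ (zAvoid_congr fun c hc =>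
    (hρ₂.supportedAvoiding_iff_of_not_properDesc hcoh hnn hw₂D hρ₂w₁ fun hc₂ => ?_).trans
      (supported_iff hcoh hnn))
  have := (T.mem_children_iff.1 hc).2
  have := hc₂.depth_lt
  have := hρ₁ρ₂.depth_lt
  omega

theorem renormMultiplier_comm_of_ancOrEq_of_not_ancOrEq (hcoh : Coherent T h)
    (hnn : ∀ v, 0 ≤ h v) (hw₁D : T.depth w₁ = D) (hw₂D : T.depth w₂ = D)
    (hρ₁ : IsRedistPoint T h D w₁ ρ₁) (hρ₁₂ : IsRedistPoint T (renorm T h D w₁ ρ₁) D w₂ ρ₁₂)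
    (hρ₂ : IsRedistPoint T h D w₂ ρ₂) (hρ₂₁ : IsRedistPoint T (renorm T h D w₂ ρ₂) D w₁ ρ₂₁)
    (hρ₁w₂ : AncOrEq T ρ₁ w₂) (hρ₂w₁ : ¬AncOrEq T ρ₂ w₁) :
    renormMultiplier T (renorm T h D w₁ ρ₁) D w₂ ρ₁₂ u * renormMultiplier T h D w₁ ρ₁ u =
      renormMultiplier T (renorm T h D w₂ ρ₂) D w₁ ρ₂₁ u * renormMultiplier T h D w₂ ρ₂ u := by
  obtain rfl := (eq_of_isRedistPoint_renorm_of_not_ancOrEq hcoh hnn hρ₁ hw₁D hρ₂ hw₂D hρ₁₂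
    hρ₂w₁).symm
  have hρ₁ρ₂ : ProperDesc T ρ₁ ρ₂ := (hρ₁w₂.total hρ₂.1).elim
    (fun h => h.properDesc_of_ne (by rintro rfl; exact hρ₂w₁ hρ₁.1))
    fun h => absurd (h.trans hρ₁.1) hρ₂w₁
  obtain rfl : ρ₁ = ρ₂₁ := by
    obtain ⟨q, hq, hqρ₂⟩ := hρ₁ρ₂.exists_child
    exact (eq_of_isRedistPoint_renorm hcoh hnn hρ₂ hw₂D hρ₁ hρ₂₁ ⟨q, hq,
      (supported_renorm_iff hcoh hnn hρ₂ hw₂D).2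
        ((hρ₂.supportedAvoiding_of_not_ancOrEq hcoh hnn hw₂D hρ₂w₁).of_ancOrEq hqρ₂)⟩).symm
  have hsupp₂ : ∀ u, ProperDesc T ρ₂ u →
      (SupportedAvoiding T h D {w₁, w₂} u ↔ Supported T h D w₂ u) := fun u hu =>
    (supportedAvoiding_insert_iff_of_not_ancOrEq (hρ₂.depth_lt hw₂D) hρ₂w₁ hu.ancOrEq).trans
      (supported_iff hcoh hnn).symm
  rw [renormMultiplier_renorm_of_properDesc hcoh hnn hρ₁ hw₁D hρ₂ hw₂D hρ₁ρ₂ hρ₂w₁,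
    renormMultiplier_renorm hcoh hnn hρ₂ hw₂D,
    renormFactor_renorm_of_properDesc hcoh hnn hρ₂ hw₂D hρ₁ρ₂ hρ₂w₁, Set.pair_comm w₂ w₁]
  by_cases hu₂ : ProperDesc T ρ₂ u
  · have hu₁ := hρ₁ρ₂.ancOrEq.trans_properDesc hu₂
    by_cases hs : SupportedAvoiding T h D {w₁, w₂} u
    · have hs₁ : Supported T h D w₁ u :=
        (supported_iff hcoh hnn).2 (hs.anti (Set.singleton_subset_iff.2 (Set.mem_insert _ _)))
      rw [renormMultiplier_of_supported hs₁, renormMultiplier_of_supported ((hsupp₂ u hu₂).1 hs),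
        if_pos hu₁, if_pos hu₂, if_pos hu₁, if_pos hs, mul_comm]
    · rw [renormMultiplier_of_not_supported hu₂ (mt (hsupp₂ u hu₂).2 hs), if_pos hu₁, if_neg hs,
        zero_mul, zero_mul]
  · rw [renormMultiplier_of_not_properDesc hu₂, one_mul, mul_one]
    simp only [renormMultiplier,
      hρ₂.supportedAvoiding_iff_of_not_properDesc hcoh hnn hw₂D hρ₂w₁ hu₂]

theorem ancOrEq_of_isRedistPoint_renorm (hcoh : Coherent T h) (hnn : ∀ v, 0 ≤ h v)
    (hw₁D : T.depth w₁ = D) (hw₂D : T.depth w₂ = D) (hρ₁ : IsRedistPoint T h D w₁ ρ₁)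
    (hρ₁₂ : IsRedistPoint T (renorm T h D w₁ ρ₁) D w₂ ρ₁₂) (hρ₂ : IsRedistPoint T h D w₂ ρ₂)
    (hρ₂₁ : IsRedistPoint T (renorm T h D w₂ ρ₂) D w₁ ρ₂₁) (hρ₂w₁ : AncOrEq T ρ₂ w₁) :
    AncOrEq T ρ₁₂ ρ₁ ∧ AncOrEq T ρ₁₂ ρ₂₁ := by
  obtain ⟨c, hc, hs⟩ := hρ₁₂.2.1
  have hs' := (supported_renorm_iff hcoh hnn hρ₁ hw₁D).1 hs
  have hρ₁₂w₁ : AncOrEq T ρ₁₂ w₁ :=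
    (hρ₂.ancOrEq_of_supported_child hρ₁₂.1 hc (hs.of_renorm hcoh hnn hρ₁ hw₁D)).trans hρ₂w₁
  refine ⟨hρ₁.ancOrEq_of_supported_child hρ₁₂w₁ hc ((supported_iff hcoh hnn).2
    (hs'.anti (Set.singleton_subset_iff.2 (Set.mem_insert _ _)))),
    hρ₂₁.ancOrEq_of_supported_child hρ₁₂w₁ hc ?_⟩
  rw [supported_renorm_iff hcoh hnn hρ₂ hw₂D, Set.pair_comm]
  exact hs'

theorem renormMultiplier_renorm_mul_of_ancOrEq (hcoh : Coherent T h) (hnn : ∀ v, 0 ≤ h v)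
    (hρ₁ : IsRedistPoint T h D w₁ ρ₁) (hw₁D : T.depth w₁ = D)
    (hρ : IsRedistPoint T (renorm T h D w₁ ρ₁) D w₂ ρ) (hρρ₁ : AncOrEq T ρ ρ₁)
    (hρ₁w₂ : AncOrEq T ρ₁ w₂) :
    renormMultiplier T (renorm T h D w₁ ρ₁) D w₂ ρ u * renormMultiplier T h D w₁ ρ₁ u =
      if ProperDesc T ρ u then
        (if SupportedAvoiding T h D {w₁, w₂} u then h ρ / ZAvoid T h D {w₁, w₂} ρ else 0)
      else 1 := by
  rw [renormMultiplier_renorm hcoh hnn hρ₁ hw₁D]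
  by_cases hu : ProperDesc T ρ u
  · by_cases hs : SupportedAvoiding T h D {w₁, w₂} u
    · have hs₁ : Supported T h D w₁ u :=
        (supported_iff hcoh hnn).2 (hs.anti (Set.singleton_subset_iff.2 (Set.mem_insert _ _)))
      -- by maximality of `ρ`, the weight below `u` can only have been rescaled if `ρ = ρ₁`
      have hiff : ProperDesc T ρ₁ u ↔ AncOrEq T ρ₁ ρ := by
        refine ⟨fun hu₁ => ?_, fun h => h.antisymm hρρ₁ ▸ hu⟩
        obtain ⟨c, hc, hcu⟩ := hu₁.exists_child
        exact hρ.ancOrEq_of_supported_child hρ₁w₂ hc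
          ((supported_renorm_iff hcoh hnn hρ₁ hw₁D).2 (hs.of_ancOrEq hcu))
      have hc0 : (if AncOrEq T ρ₁ ρ then renormFactor T h D w₁ ρ₁ else 1) ≠ 0 := by
        split_ifs
        exacts [(hρ₁.renormFactor_pos hcoh hnn hw₁D).ne', one_ne_zero]
      rw [if_pos hu, if_pos hu, if_pos hs, if_pos hs, renormMultiplier_of_supported hs₁,
        renormFactor_renorm hcoh hnn hρ₁ hw₁D,
        renorm_of_not_properDesc fun h => absurd h.depth_lt (not_lt.2 hρρ₁.depth_le), hiff,
        mul_comm _ (ZAvoid _ _ _ _ _), div_mul_eq_div_div, div_mul_cancel₀ _ hc0]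
    · rw [if_pos hu, if_pos hu, if_neg hs, if_neg hs, zero_mul]
  · rw [if_neg hu, if_neg hu,
      renormMultiplier_of_not_properDesc fun h => hu (hρρ₁.trans_properDesc h), one_mul]

theorem renormMultiplier_comm_of_ancOrEq (hcoh : Coherent T h) (hnn : ∀ v, 0 ≤ h v)
    (hw₁D : T.depth w₁ = D) (hw₂D : T.depth w₂ = D) (hρ₁ : IsRedistPoint T h D w₁ ρ₁)
    (hρ₁₂ : IsRedistPoint T (renorm T h D w₁ ρ₁) D w₂ ρ₁₂) (hρ₂ : IsRedistPoint T h D w₂ ρ₂)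
    (hρ₂₁ : IsRedistPoint T (renorm T h D w₂ ρ₂) D w₁ ρ₂₁)
    (hρ₁w₂ : AncOrEq T ρ₁ w₂) (hρ₂w₁ : AncOrEq T ρ₂ w₁) :
    renormMultiplier T (renorm T h D w₁ ρ₁) D w₂ ρ₁₂ u * renormMultiplier T h D w₁ ρ₁ u =
      renormMultiplier T (renorm T h D w₂ ρ₂) D w₁ ρ₂₁ u * renormMultiplier T h D w₂ ρ₂ u := by
  obtain ⟨hρ₁₂ρ₁, hρ₁₂ρ₂₁⟩ :=
    ancOrEq_of_isRedistPoint_renorm hcoh hnn hw₁D hw₂D hρ₁ hρ₁₂ hρ₂ hρ₂₁ hρ₂w₁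
  obtain ⟨hρ₂₁ρ₂, hρ₂₁ρ₁₂⟩ :=
    ancOrEq_of_isRedistPoint_renorm hcoh hnn hw₂D hw₁D hρ₂ hρ₂₁ hρ₁ hρ₁₂ hρ₁w₂
  obtain rfl := hρ₁₂ρ₂₁.antisymm hρ₂₁ρ₁₂
  rw [renormMultiplier_renorm_mul_of_ancOrEq hcoh hnn hρ₁ hw₁D hρ₁₂ hρ₁₂ρ₁ hρ₁w₂,
    renormMultiplier_renorm_mul_of_ancOrEq hcoh hnn hρ₂ hw₂D hρ₂₁ hρ₂₁ρ₂ hρ₂w₁, Set.pair_comm]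

end Commutation

theorem stmt6_general {V : Type} (T : RTree V) (h : V → ℝ) (D : ℕ)
    (w₁ w₂ ρ₁ ρ₁₂ ρ₂ ρ₂₁ : V)
    (hcoh : Coherent T h) (hnn : ∀ v : V, 0 ≤ h v)
    (hw₁D : T.depth w₁ = D) (hw₂D : T.depth w₂ = D)
    (hρ₁ : IsRedistPoint T h D w₁ ρ₁)
    (hρ₁₂ : IsRedistPoint T (renorm T h D w₁ ρ₁) D w₂ ρ₁₂)
    (hρ₂ : IsRedistPoint T h D w₂ ρ₂)
    (hρ₂₁ : IsRedistPoint T (renorm T h D w₂ ρ₂) D w₁ ρ₂₁) :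
    renorm T (renorm T h D w₁ ρ₁) D w₂ ρ₁₂ =
      renorm T (renorm T h D w₂ ρ₂) D w₁ ρ₂₁ := by
  funext u
  rw [renorm_renorm_eq_mul, renorm_renorm_eq_mul]
  congr 1
  by_cases hρ₁w₂ : AncOrEq T ρ₁ w₂ <;> by_cases hρ₂w₁ : AncOrEq T ρ₂ w₁
  · exact renormMultiplier_comm_of_ancOrEq hcoh hnn hw₁D hw₂D hρ₁ hρ₁₂ hρ₂ hρ₂₁ hρ₁w₂ hρ₂w₁
  · exact renormMultiplier_comm_of_ancOrEq_of_not_ancOrEq hcoh hnn hw₁D hw₂D hρ₁ hρ₁₂ hρ₂ hρ₂₁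
      hρ₁w₂ hρ₂w₁
  · exact (renormMultiplier_comm_of_ancOrEq_of_not_ancOrEq hcoh hnn hw₂D hw₁D hρ₂ hρ₂₁ hρ₁ hρ₁₂
      hρ₂w₁ hρ₁w₂).symm
  · exact renormMultiplier_comm_of_not_ancOrEq hcoh hnn hw₁D hw₂D hρ₁ hρ₁₂ hρ₂ hρ₂₁ hρ₁w₂ hρ₂w₁

/-- Renormalization operations commute: for two distinct depth-`D` vertices
`w₁` and `w₂` to be refuted, if there is a third depth-`D` vertex `w` with
positive weight distinct from both, then renormalizing with respect to `w₁`
and then `w₂` (with the respective redistribution points) yields the same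
weight function as renormalizing with respect to `w₂` and then `w₁`. -/
theorem stmt6 {V : Type} (T : RTree V) (h : V → ℝ) (D : ℕ)
    (w₁ w₂ w ρ₁ ρ₁₂ ρ₂ ρ₂₁ : V)
    (hcoh : Coherent T h) (hnn : ∀ v : V, 0 ≤ h v)
    (hw₁D : T.depth w₁ = D) (hw₂D : T.depth w₂ = D) (hne : w₁ ≠ w₂)
    (hwD : T.depth w = D) (hne₁ : w ≠ w₁) (hne₂ : w ≠ w₂) (hpos : 0 < h w)
    (hρ₁ : IsRedistPoint T h D w₁ ρ₁)
    (hρ₁₂ : IsRedistPoint T (renorm T h D w₁ ρ₁) D w₂ ρ₁₂)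
    (hρ₂ : IsRedistPoint T h D w₂ ρ₂)
    (hρ₂₁ : IsRedistPoint T (renorm T h D w₂ ρ₂) D w₁ ρ₂₁) :
    renorm T (renorm T h D w₁ ρ₁) D w₂ ρ₁₂ =
      renorm T (renorm T h D w₂ ρ₂) D w₁ ρ₂₁ :=
  stmt6_general T h D w₁ w₂ ρ₁ ρ₁₂ ρ₂ ρ₂₁ hcoh hnn hw₁D hw₂D hρ₁ hρ₁₂ hρ₂ hρ₂₁
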